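/- For every nonnegative integer i there exists an edge-ordered graph with exactly 2^i vertices and i·2^{i−1} edges that avoids P_5^{1342}; consequently lex(n, P_5^{1342}) = Ω(n log n), i.e., there is a constant c > 0 such that lex(n, P_5^{1342}) ≥ c·n·log n for all n ≥ 2. -/

import Mathlib

/-- An edge-ordered graph: a finite simple graph on vertex set `Fin nv`
together with a labeling of (potential) edges.  The edge-order is the order of
the labels; the labeling is required to be injective on the edge set via
`EOGraph.Valid`. -/
structure EOGraph where
  nv : ℕ
  graph : SimpleGraph (Fin nv)
  label : Sym2 (Fin nv) → ℕ

namespace EOGraph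

/-- The labeling is injective on the edge set, hence defines a linear order on the edges. -/
def Valid (G : EOGraph) : Prop :=
  ∀ e ∈ G.graph.edgeSet, ∀ f ∈ G.graph.edgeSet, G.label e = G.label f → e = f

/-- The number of edges of an edge-ordered graph. -/
noncomputable def edges (G : EOGraph) : ℕ := G.graph.edgeSet.ncard

/-- `G.Contains H`: some subgraph of `G`, with the edge-order induced from `G`,
is isomorphic to `H` (via a graph isomorphism preserving the relative order of edges). -/
def Contains (G H : EOGraph) : Prop :=
  ∃ f : Fin H.nv ↪ Fin G.nv,
    (∀ a b, H.graph.Adj a b → G.graph.Adj (f a) (f b)) ∧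
    ∀ a b c d, H.graph.Adj a b → H.graph.Adj c d →
      (H.label s(a, b) < H.label s(c, d) ↔ G.label s(f a, f b) < G.label s(f c, f d))

/-- `G` avoids `H` if no subgraph of `G` (with the induced edge-order) is isomorphic to `H`. -/
def Avoids (G H : EOGraph) : Prop := ¬ G.Contains H

/-- `G` avoids a family if it avoids every member. -/
def AvoidsFam (G : EOGraph) (F : Set EOGraph) : Prop := ∀ H ∈ F, G.Avoids H

/-- Isomorphism of edge-ordered graphs. -/
def Iso (G H : EOGraph) : Prop :=
  ∃ f : Fin G.nv ≃ Fin H.nv,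
    (∀ a b, G.graph.Adj a b ↔ H.graph.Adj (f a) (f b)) ∧
    ∀ a b c d, G.graph.Adj a b → G.graph.Adj c d →
      (G.label s(a, b) < G.label s(c, d) ↔ H.label s(f a, f b) < H.label s(f c, f d))

end EOGraph

/-- A simple graph `G` can avoid the family `F` if some linear order on its edges
(given by a labeling injective on the edge set) makes it into an edge-ordered graph
avoiding `F`. -/
def CanAvoid {n : ℕ} (G : SimpleGraph (Fin n)) (F : Set EOGraph) : Prop :=
  ∃ L : Sym2 (Fin n) → ℕ, (EOGraph.mk n G L).Valid ∧ (EOGraph.mk n G L).AvoidsFam F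

/-- The order chromatic number of a family of edge-ordered graphs: the least chromatic
number of a finite simple graph that cannot avoid the family (`⊤` if every finite
simple graph can avoid it). -/
noncomputable def orderChrom (F : Set EOGraph) : ℕ∞ :=
  ⨅ (n : ℕ) (G : SimpleGraph (Fin n)) (_ : ¬ CanAvoid G F), G.chromaticNumber

/-- The Turán number `lex(n, F)`: the maximum number of edges of an edge-ordered graph
on `n` vertices avoiding the family `F`. -/
noncomputable def lexFam (n : ℕ) (F : Set EOGraph) : ℕ :=
  sSup {m : ℕ | ∃ G : EOGraph, G.nv = n ∧ G.Valid ∧ G.AvoidsFam F ∧ G.edges = m}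

/-- Build a symmetric labeling from a function of the (min, max) of the two endpoints. -/
def symLabel {N : ℕ} (f : Fin N → Fin N → ℕ) : Sym2 (Fin N) → ℕ :=
  Sym2.lift ⟨fun a b => f (min a b) (max a b), fun a b => by
    show f (min a b) (max a b) = f (min b a) (max b a)
    rw [min_comm, max_comm]⟩

/-- The edge-ordered path on `k` vertices `0, 1, …, k-1`, where the edge `{i, i+1}`
gets label `l[i]`. -/
def pathEO (k : ℕ) (l : List ℕ) : EOGraph where
  nv := k
  graph := SimpleGraph.fromRel (fun a b => (a : ℕ) + 1 = (b : ℕ))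
  label := symLabel fun a _ => l.getD (a : ℕ) 0

/-- The edge-ordered path `P_5^{1342}`: edge-order `ab < de < bc < cd`. -/
def P5_1342 : EOGraph := pathEO 5 [1, 3, 4, 2]

/-!
Order the edges of the hypercube `Q_i` (vertices `0, …, 2^i - 1`, `u ~ u ^^^ 2^j`) by their lower
endpoint, decreasing, and then by their direction `j`, increasing. In a copy `a b c d e` of
`P_5^{1342}` the edges `bc < cd` must both have lower endpoint `c`, so `b = c + 2^j₂` and
`d = c + 2^j₃` with `j₂ < j₃`. The lower endpoint of `de` lies between `c` and `min a b ≤ b`, so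
`e` is a neighbour of `d` in that range, and the only ones are `c` and `b`. The cube is
`i`-regular, hence has `i·2^(i-1)` edges, and `Q_k` with `k = ⌊log n⌋` placed on `n` vertices
gives the `Ω(n log n)` bound.
-/

namespace Nat

theorem xor_two_pow_of_testBit_eq_false {u j : ℕ} (h : u.testBit j = false) :
    u ^^^ 2 ^ j = u + 2 ^ j := by
  induction j generalizing u with
  | zero =>
    simp only [testBit_zero, decide_eq_false_iff_not] at h
    exact xor_one_of_even (even_iff.2 (by omega))
  | succ j ih =>
    rw [testBit_add_one] at h
    have hdiv : (u ^^^ 2 ^ (j + 1)) / 2 = u / 2 + 2 ^ j := by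
      rw [xor_div_two, pow_succ, Nat.mul_div_cancel _ two_pos, ih h]
    have hmod : (u ^^^ 2 ^ (j + 1)) % 2 = (u + 2 ^ (j + 1)) % 2 := xor_mod_two_eq
    have hpow : 2 ^ (j + 1) = 2 ^ j * 2 := pow_succ 2 j
    omega

theorem max_eq_min_add_of_xor_eq_two_pow {u v j : ℕ} (h : u ^^^ v = 2 ^ j) :
    max u v = min u v + 2 ^ j := by
  have hv : v = u ^^^ 2 ^ j := by rw [← h, xor_xor_cancel_left]
  cases hu : u.testBit j
  · rw [hv, xor_two_pow_of_testBit_eq_false hu]; omega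
  · have hvj : v.testBit j = false := by simp [hv, hu, testBit_two_pow_self]
    have hu' : u = v ^^^ 2 ^ j := by rw [hv, xor_xor_cancel_right]
    rw [hu', xor_two_pow_of_testBit_eq_false hvj]; omega

theorem two_mul_two_pow_le_two_pow {a b : ℕ} (h : a < b) : 2 * 2 ^ a ≤ 2 ^ b := by
  rw [← pow_succ']
  exact pow_le_pow_right₀ one_le_two h

theorem mul_add_lt_mul_add_of_lt {i q q' r r' : ℕ} (hq : q < q') (hr : r < i) :
    q * i + r < q' * i + r' :=
  calc q * i + r < (q + 1) * i := by rw [succ_mul]; omega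
    _ ≤ q' * i + r' := le_add_right_of_le (Nat.mul_le_mul_right i hq)

theorem lt_or_eq_and_lt_of_mul_add_lt {i q q' r r' : ℕ} (hr' : r' < i)
    (h : q * i + r < q' * i + r') : q < q' ∨ q = q' ∧ r < r' := by
  rcases lt_trichotomy q q' with hq | rfl | hq
  · exact .inl hq
  · exact .inr ⟨rfl, by omega⟩
  · exact absurd h (mul_add_lt_mul_add_of_lt hq hr').not_gt

theorem eq_and_eq_of_mul_add_eq {i q q' r r' : ℕ} (hr : r < i) (hr' : r' < i)
    (h : q * i + r = q' * i + r') : q = q' ∧ r = r' := by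
  rcases lt_trichotomy q q' with hq | rfl | hq
  · exact absurd h (mul_add_lt_mul_add_of_lt hq hr).ne
  · exact ⟨rfl, by omega⟩
  · exact absurd h (mul_add_lt_mul_add_of_lt hq hr').ne'

end Nat

section Hypercube

def cubeGraph (i n : ℕ) : SimpleGraph (Fin n) where
  Adj u v := (u : ℕ) < 2 ^ i ∧ (v : ℕ) < 2 ^ i ∧ ∃ j < i, (u : ℕ) ^^^ v = 2 ^ j
  symm := ⟨fun _ _ ⟨hu, hv, j, hj, h⟩ => ⟨hv, hu, j, hj, by rwa [Nat.xor_comm]⟩⟩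
  loopless := ⟨fun _ ⟨_, _, j, _, h⟩ => (Nat.two_pow_pos j).ne (by simpa using h)⟩

instance (i n : ℕ) : DecidableRel (cubeGraph i n).Adj := fun u v =>
  inferInstanceAs (Decidable ((u : ℕ) < 2 ^ i ∧ (v : ℕ) < 2 ^ i ∧ ∃ j < i, (u : ℕ) ^^^ v = 2 ^ j))

def cubeLabel (i n : ℕ) : Sym2 (Fin n) → ℕ :=
  Sym2.lift ⟨fun u v => (n - min (u : ℕ) v) * i + Nat.log 2 ((u : ℕ) ^^^ v),
    fun u v => by simp only [min_comm, Nat.xor_comm]⟩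

def cubeEO (i n : ℕ) : EOGraph := ⟨n, cubeGraph i n, cubeLabel i n⟩

variable {i n : ℕ}

theorem cubeLabel_mk {u v : Fin n} {j : ℕ} (h : (u : ℕ) ^^^ v = 2 ^ j) :
    cubeLabel i n s(u, v) = (n - min (u : ℕ) v) * i + j := by
  simp [cubeLabel, h, Nat.log_pow]

theorem min_le_min_of_cubeLabel_lt {u v u' v' : Fin n} {j j' : ℕ} (h : (u : ℕ) ^^^ v = 2 ^ j)
    (h' : (u' : ℕ) ^^^ v' = 2 ^ j') (hj' : j' < i)
    (hlt : cubeLabel i n s(u, v) < cubeLabel i n s(u', v')) :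
    min (u' : ℕ) v' ≤ min (u : ℕ) v ∧ (min (u : ℕ) v = min (u' : ℕ) v' → j < j') := by
  rw [cubeLabel_mk h, cubeLabel_mk h'] at hlt
  have hu : (u : ℕ) < n := u.isLt
  have hu' : (u' : ℕ) < n := u'.isLt
  rcases Nat.lt_or_eq_and_lt_of_mul_add_lt hj' hlt with hm | ⟨hm, hj⟩ <;> omega

theorem cubeEO_valid : (cubeEO i n).Valid := by
  intro e he e' he' heq
  induction e using Sym2.ind with | _ u v => ?_
  induction e' using Sym2.ind with | _ u' v' => ?_
  obtain ⟨-, -, j, hj, h⟩ := he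
  obtain ⟨-, -, j', hj', h'⟩ := he'
  dsimp only at h h'
  obtain ⟨hm, rfl⟩ := Nat.eq_and_eq_of_mul_add_eq hj hj'
    ((cubeLabel_mk h).symm.trans (heq.trans (cubeLabel_mk h')))
  have hmax := Nat.max_eq_min_add_of_xor_eq_two_pow h
  have hmax' := Nat.max_eq_min_add_of_xor_eq_two_pow h'
  have hu : (u : ℕ) < n := u.isLt
  have hu' : (u' : ℕ) < n := u'.isLt
  rw [Sym2.eq_iff, Fin.ext_iff, Fin.ext_iff, Fin.ext_iff, Fin.ext_iff]
  omega

open Finset in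
theorem cubeGraph_degree_of_lt (hn : 2 ^ i ≤ n) {v : Fin n} (hv : (v : ℕ) < 2 ^ i) :
    (cubeGraph i n).degree v = i := by
  have hlt (j : Fin i) : (v : ℕ) ^^^ 2 ^ (j : ℕ) < 2 ^ i :=
    Nat.xor_lt_two_pow hv (Nat.pow_lt_pow_right one_lt_two j.isLt)
  let neighbor : Fin i ↪ Fin n :=
    ⟨fun j => ⟨(v : ℕ) ^^^ 2 ^ (j : ℕ), (hlt j).trans_le hn⟩, fun j j' h => by
      simpa [Fin.ext_iff, Nat.pow_right_injective le_rfl |>.eq_iff] using h⟩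
  have hnbr : (cubeGraph i n).neighborFinset v = univ.map neighbor := by
    ext w
    simp only [SimpleGraph.mem_neighborFinset, mem_map, mem_univ, true_and]
    constructor
    · rintro ⟨-, -, j, hj, h⟩
      exact ⟨⟨j, hj⟩, Fin.ext (show (v : ℕ) ^^^ 2 ^ j = w by rw [← h, Nat.xor_xor_cancel_left])⟩
    · rintro ⟨j, rfl⟩
      exact ⟨hv, hlt j, j, j.isLt, Nat.xor_xor_cancel_left _ _⟩
  rw [← SimpleGraph.card_neighborFinset_eq_degree, hnbr, card_map, card_univ, Fintype.card_fin]

theorem cubeGraph_degree_of_le {v : Fin n} (hv : 2 ^ i ≤ (v : ℕ)) :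
    (cubeGraph i n).degree v = 0 :=
  Finset.card_eq_zero.2 <| Finset.eq_empty_of_forall_notMem fun _ hw =>
    hv.not_gt (((cubeGraph i n).mem_neighborFinset v _).1 hw).1

theorem cubeGraph_ncard_edgeSet (hn : 2 ^ i ≤ n) :
    (cubeGraph i n).edgeSet.ncard = i * 2 ^ (i - 1) := by
  have hsum := (cubeGraph i n).sum_degrees_eq_twice_card_edges
  have hdeg (v : Fin n) : (cubeGraph i n).degree v = if (v : ℕ) < 2 ^ i then i else 0 := by
    split_ifs with hv
    · exact cubeGraph_degree_of_lt hn hv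
    · exact cubeGraph_degree_of_le (not_lt.1 hv)
  simp only [hdeg, Finset.sum_ite, Finset.sum_const, smul_eq_mul, mul_zero, add_zero,
    Fin.card_filter_val_lt, min_eq_right hn] at hsum
  rw [← SimpleGraph.coe_edgeFinset, Set.ncard_coe_finset]
  rcases i with _ | i
  · simpa using hsum
  · rw [pow_succ] at hsum
    simp only [Nat.add_sub_cancel]
    linarith

end Hypercube

theorem EOGraph.Contains.exists_path_1342 {G : EOGraph} (h : G.Contains P5_1342) :
    ∃ a b c d e : Fin G.nv, c ≠ e ∧ b ≠ e ∧
      G.graph.Adj a b ∧ G.graph.Adj b c ∧ G.graph.Adj c d ∧ G.graph.Adj d e ∧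
      G.label s(a, b) < G.label s(d, e) ∧ G.label s(d, e) < G.label s(b, c) ∧
      G.label s(b, c) < G.label s(c, d) := by
  obtain ⟨f, hadj, hlabel⟩ := h
  have adj (k : Fin 4) : P5_1342.graph.Adj k.castSucc k.succ := by
    fin_cases k <;> simp [P5_1342, pathEO]
  exact ⟨f (0 : Fin 4).castSucc, f (0 : Fin 4).succ, f (1 : Fin 4).succ, f (2 : Fin 4).succ,
    f (3 : Fin 4).succ, f.injective.ne (Fin.ne_of_val_ne (by decide)),
    f.injective.ne (Fin.ne_of_val_ne (by decide)),
    hadj _ _ (adj 0), hadj _ _ (adj 1), hadj _ _ (adj 2), hadj _ _ (adj 3),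
    (hlabel _ _ _ _ (adj 0) (adj 3)).1 (by decide), (hlabel _ _ _ _ (adj 3) (adj 1)).1 (by decide),
    (hlabel _ _ _ _ (adj 1) (adj 2)).1 (by decide)⟩

theorem not_cube_path_1342 {a b c d e j₂ j₃ j₄ : ℕ} (h₂ : max b c = min b c + 2 ^ j₂)
    (h₃ : max c d = min c d + 2 ^ j₃) (h₄ : max d e = min d e + 2 ^ j₄)
    (hce : c ≠ e) (hbe : b ≠ e) (h₁₄ : min d e ≤ min a b) (h₄₂ : min b c ≤ min d e)
    (h₂₃ : min c d ≤ min b c) (h₂₃' : min b c = min c d → j₂ < j₃) : False := by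
  have := Nat.two_pow_pos j₂
  have := Nat.two_pow_pos j₄
  have I₂₃ : j₂ < j₃ → 2 * 2 ^ j₂ ≤ 2 ^ j₃ := Nat.two_mul_two_pow_le_two_pow
  have I₄₃ : 2 ^ j₄ < 2 ^ j₃ → 2 * 2 ^ j₄ ≤ 2 ^ j₃ := fun h =>
    Nat.two_mul_two_pow_le_two_pow ((Nat.pow_lt_pow_iff_right one_lt_two).1 h)
  omega

theorem cubeEO_avoids_P5_1342 (i n : ℕ) : (cubeEO i n).Avoids P5_1342 := by
  intro h
  obtain ⟨a, b, c, d, e, hce, hbe, ⟨-, -, j₁, -, h₁⟩, ⟨-, -, j₂, hj₂, h₂⟩, ⟨-, -, j₃, hj₃, h₃⟩,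
    ⟨-, -, j₄, hj₄, h₄⟩, h₁₄, h₄₂, h₂₃⟩ := h.exists_path_1342
  obtain ⟨h₂₃, h₂₃'⟩ := min_le_min_of_cubeLabel_lt h₂ h₃ hj₃ h₂₃
  exact not_cube_path_1342 (Nat.max_eq_min_add_of_xor_eq_two_pow h₂)
    (Nat.max_eq_min_add_of_xor_eq_two_pow h₃) (Nat.max_eq_min_add_of_xor_eq_two_pow h₄)
    (Fin.val_ne_of_ne hce) (Fin.val_ne_of_ne hbe) (min_le_min_of_cubeLabel_lt h₁ h₄ hj₄ h₁₄).1
    (min_le_min_of_cubeLabel_lt h₄ h₂ hj₂ h₄₂).1 h₂₃ h₂₃'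

theorem EOGraph.edges_le_lexFam {G : EOGraph} {F : Set EOGraph} (hG : G.Valid)
    (hF : G.AvoidsFam F) : G.edges ≤ lexFam G.nv F :=
  le_csSup ⟨Nat.card (Sym2 (Fin G.nv)), fun _ ⟨_, hnv, _, _, hm⟩ => hm ▸ hnv ▸ Set.ncard_le_card _⟩
    ⟨G, rfl, hG, hF, rfl⟩

theorem natCast_mul_logb_two_le {n : ℕ} (hn : 2 ≤ n) :
    (n : ℝ) * Real.logb 2 n ≤ 8 * (Nat.log 2 n * 2 ^ (Nat.log 2 n - 1) : ℕ) := by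
  set k := Nat.log 2 n
  have hk1 : 1 ≤ k := Nat.le_log_of_pow_le one_lt_two (by simpa using hn)
  have hnk : n ≤ 4 * 2 ^ (k - 1) := by
    have h : n < 2 ^ (k - 1 + 2) := by
      rw [show k - 1 + 2 = k + 1 by omega]; exact Nat.lt_pow_succ_log_self one_lt_two n
    rw [pow_add] at h
    omega
  have hlog : Real.logb 2 n ≤ 2 * k := by
    have h := Nat.lt_floor_add_one (Real.logb 2 n)
    have hfloor : ⌊Real.logb 2 n⌋₊ = k := by exact_mod_cast Real.natFloor_logb_natCast 2 n
    have : (1 : ℝ) ≤ k := by exact_mod_cast hk1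
    rw [hfloor] at h
    linarith
  have hlog0 : 0 ≤ Real.logb 2 n := Real.logb_nonneg one_lt_two (by exact_mod_cast by omega)
  calc (n : ℝ) * Real.logb 2 n ≤ (4 * 2 ^ (k - 1) : ℕ) * (2 * k) :=
        mul_le_mul (by exact_mod_cast hnk) hlog hlog0 (by positivity)
    _ = 8 * (k * 2 ^ (k - 1) : ℕ) := by push_cast; ring

/-- For every `i` there is an edge-ordered graph with exactly `2^i`
vertices and `i·2^(i-1)` edges avoiding `P_5^{1342}`; consequently
`lex(n, P_5^{1342}) = Ω(n log n)`. -/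
theorem lex_P5_1342_lower :
    (∀ i : ℕ, ∃ G : EOGraph, G.nv = 2 ^ i ∧ G.Valid ∧ G.edges = i * 2 ^ (i - 1) ∧
      G.Avoids P5_1342) ∧
    ∃ c : ℝ, 0 < c ∧ ∀ n : ℕ, 2 ≤ n →
      c * (n : ℝ) * Real.logb 2 (n : ℝ) ≤ (lexFam n {P5_1342} : ℝ) := by
  refine ⟨fun i => ⟨cubeEO i (2 ^ i), rfl, cubeEO_valid, cubeGraph_ncard_edgeSet le_rfl,
    cubeEO_avoids_P5_1342 i _⟩, 1 / 8, by norm_num, fun n hn => ?_⟩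
  set k := Nat.log 2 n
  have hcube : k * 2 ^ (k - 1) ≤ lexFam n {P5_1342} := by
    rw [← cubeGraph_ncard_edgeSet (Nat.pow_log_le_self 2 (by omega))]
    exact EOGraph.edges_le_lexFam (G := cubeEO k n) cubeEO_valid
      fun _ hH => (Set.mem_singleton_iff.1 hH) ▸ cubeEO_avoids_P5_1342 k n
  have := natCast_mul_logb_two_le hn
  have : ((k * 2 ^ (k - 1) : ℕ) : ℝ) ≤ lexFam n {P5_1342} := by exact_mod_cast hcube
  linarith
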